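/- arXiv:1805.02089 — 4 statements merged into one kernel-verified Lean document; each statement's English description precedes it below -/
import Mathlib

section
/- If P is an acyclic orientation of a complete multipartite graph, then every vertex not in the part containing the sources is reachable from every source of P. -/
/-- A source of a digraph (relation `r`): a vertex with no incoming arc. -/
def IsSource {V : Type*} (r : V → V → Prop) (v : V) : Prop := ∀ u, ¬ r u v

/-- A digraph is acyclic if it has no directed cycle. -/
def DigraphAcyclic {V : Type*} (r : V → V → Prop) : Prop :=
  ∀ v, ¬ Relation.TransGen r v v

/-- `r` is an orientation of the simple graph `G`: every edge gets exactly one direction. -/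
def IsOrientationOf {V : Type*} (G : SimpleGraph V) (r : V → V → Prop) : Prop :=
  (∀ u v, G.Adj u v ↔ (r u v ∨ r v u)) ∧ ∀ u v, r u v → ¬ r v u

/-- In an acyclic orientation of a complete multipartite graph, every vertex not
in the part containing the sources is reachable from every source. -/
theorem multipartite_reachable_from_source {V P : Type*} [Fintype V] (parts : V → P)
    (H : SimpleGraph V) (hH : ∀ u v, H.Adj u v ↔ parts u ≠ parts v)
    (r : V → V → Prop) (hor : IsOrientationOf H r) (hac : DigraphAcyclic r) :
    ∀ u, IsSource r u → ∀ v, parts v ≠ parts u → Relation.ReflTransGen r u v := by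
  intro u hu v hv
  have hadj : H.Adj u v := (hH u v).mpr (fun h => hv h.symm)
  rcases (hor.1 u v).mp hadj with h | h
  · exact Relation.ReflTransGen.single h
  · exact absurd h (hu v)
end

section
/- The number of homomorphisms from an undirected graph H to an acyclically oriented graph G (ignoring orientations of G) equals the sum, over all acyclic orientations σ of H, of the number of orientation-preserving homomorphisms from H_σ to G. -/
theorem Set.ncard_eq_sum_ncard_fiberwise {α β : Type*} [Fintype α] [Fintype β]
    (p : α → Prop) (f : α → β) :
    {x | p x}.ncard = ∑ b, {x | p x ∧ f x = b}.ncard := by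
  classical
  simpa [← Set.ncard_coe_finset, Finset.filter_filter] using
    Finset.card_eq_sum_card_fiberwise (s := Finset.univ.filter p) (t := Finset.univ) (f := f)
      (fun x _ => Finset.mem_univ (f x))

namespace DigraphAcyclic

variable {V W : Type*} {s : W → W → Prop}

theorem asymm (hs : DigraphAcyclic s) {a b : W} (hab : s a b) : ¬ s b a :=
  fun hba => hs a ((Relation.TransGen.single hab).tail hba)

theorem of_map (hs : DigraphAcyclic s) {r : V → V → Prop} (φ : V → W)
    (hφ : ∀ a b, r a b → s (φ a) (φ b)) : DigraphAcyclic r :=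
  fun v hv => hs (φ v) (Relation.TransGen.lift φ hφ v v hv)

end DigraphAcyclic

section InducedOrientation

variable {V W : Type*} (H : SimpleGraph V) (s : W → W → Prop) (φ : V → W)

open Classical in
noncomputable def inducedOrientation : V → V → Bool :=
  fun a b => decide (H.Adj a b ∧ s (φ a) (φ b))

variable {H s φ}

theorem inducedOrientation_eq_true {a b : V} :
    inducedOrientation H s φ a b = true ↔ H.Adj a b ∧ s (φ a) (φ b) := by
  classical exact decide_eq_true_iff

theorem isOrientationOf_inducedOrientation (hs : ∀ a b, s a b → ¬ s b a)
    (hφ : ∀ u v, H.Adj u v → s (φ u) (φ v) ∨ s (φ v) (φ u)) :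
    IsOrientationOf H (fun a b => inducedOrientation H s φ a b = true) := by
  simp only [inducedOrientation_eq_true]
  refine ⟨fun u v => ⟨fun huv => ?_, ?_⟩, fun u v huv hvu => hs _ _ huv.2 hvu.2⟩
  · exact (hφ u v huv).imp (⟨huv, ·⟩) (⟨huv.symm, ·⟩)
  · rintro (huv | hvu)
    exacts [huv.1, hvu.1.symm]

theorem inducedOrientation_eq_of_forall_map (hs : ∀ a b, s a b → ¬ s b a) {σ : V → V → Bool}
    (hσ : IsOrientationOf H (fun a b => σ a b = true))
    (hφ : ∀ a b, σ a b = true → s (φ a) (φ b)) :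
    inducedOrientation H s φ = σ := by
  funext a b
  rw [Bool.eq_iff_iff, inducedOrientation_eq_true]
  refine ⟨fun ⟨hab, hs_ab⟩ => ?_, fun hσ_ab => ⟨(hσ.1 a b).2 (Or.inl hσ_ab), hφ a b hσ_ab⟩⟩
  exact ((hσ.1 a b).1 hab).resolve_right fun hσ_ba => hs _ _ hs_ab (hφ b a hσ_ba)

theorem acyclicOrientation_hom_iff_inducedOrientation_eq (hs : DigraphAcyclic s)
    (σ : V → V → Bool) :
    ((IsOrientationOf H (fun a b => σ a b = true) ∧ DigraphAcyclic (fun a b => σ a b = true)) ∧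
        ∀ a b, σ a b = true → s (φ a) (φ b)) ↔
      (∀ u v, H.Adj u v → s (φ u) (φ v) ∨ s (φ v) (φ u)) ∧ inducedOrientation H s φ = σ := by
  have hs_asymm : ∀ a b, s a b → ¬ s b a := fun _ _ => hs.asymm
  constructor
  · rintro ⟨⟨hσ, -⟩, hφ⟩
    refine ⟨fun u v huv => ?_, inducedOrientation_eq_of_forall_map hs_asymm hσ hφ⟩
    exact ((hσ.1 u v).1 huv).imp (hφ u v) (hφ v u)
  · rintro ⟨hφ, rfl⟩
    have hmap : ∀ a b, inducedOrientation H s φ a b = true → s (φ a) (φ b) :=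
      fun _ _ hab => (inducedOrientation_eq_true.1 hab).2
    exact ⟨⟨isOrientationOf_inducedOrientation hs_asymm hφ, hs.of_map φ hmap⟩, hmap⟩

end InducedOrientation

/-- The number of homomorphisms from an undirected graph `H` to (the underlying graph
of) a dag `G` equals the sum, over all acyclic orientations `σ` of `H`, of the number
of orientation-preserving homomorphisms from `H_σ` to `G`. -/
theorem hom_count_eq_sum_orientations {VH W : Type*} [Fintype VH] [DecidableEq VH]
    [Fintype W] (H : SimpleGraph VH) (s : W → W → Prop) (hs : DigraphAcyclic s) :
    {φ : VH → W | ∀ u v, H.Adj u v → s (φ u) (φ v) ∨ s (φ v) (φ u)}.ncard =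
      ∑ σ : VH → VH → Bool,
        {φ : VH → W |
          (IsOrientationOf H (fun a b => σ a b = true) ∧
            DigraphAcyclic (fun a b => σ a b = true)) ∧
          ∀ a b, σ a b = true → s (φ a) (φ b)}.ncard := by
  rw [Set.ncard_eq_sum_ncard_fiberwise _ (inducedOrientation H s)]
  simp only [acyclicOrientation_hom_iff_inducedOrientation_eq hs]
end

section
/- Let P be a dag with source set S and let T be a dag tree decomposition of P. If B is a node of T with children B_1,...,B_l, then for all i ≠ j, the vertex sets reachable from the down-closures of B_i and B_j intersect only inside the set reachable from B: V_P(B̄_i) ∩ V_P(B̄_j) ⊆ V_P(B). -/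
/-- The set of vertices of the digraph `r` reachable from the vertex set `X`. -/
def Reach {V : Type*} (r : V → V → Prop) (X : Set V) : Set V :=
  {v | ∃ u ∈ X, Relation.ReflTransGen r u v}

/-- A dag tree decomposition of the dag `r`: a tree `T` whose nodes carry bags of
sources of `r`, covering all sources, such that whenever a node `i` lies on the tree
path between nodes `j` and `k`, the sets reachable from the bags of `j` and `k`
intersect only inside the set reachable from the bag of `i`. -/
structure IsDTD {V ι : Type*} (r : V → V → Prop) (T : SimpleGraph ι)
    (bag : ι → Set V) : Prop where
  isTree : T.IsTree
  bag_subset_sources : ∀ i, bag i ⊆ {v | IsSource r v}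
  bag_union : (⋃ i, bag i) = {v | IsSource r v}
  path_prop : ∀ (i j k : ι) (p : T.Walk j k), p.IsPath → i ∈ p.support →
    Reach r (bag j) ∩ Reach r (bag k) ⊆ Reach r (bag i)

/-- `j` belongs to the subtree of `T` (rooted at `ρ`) rooted at `i`:
every path from the root `ρ` to `j` passes through `i`. -/
def InSubtree {ι : Type*} (T : SimpleGraph ι) (ρ i j : ι) : Prop :=
  ∀ p : T.Walk ρ j, p.IsPath → i ∈ p.support

/-- `i` is a child of `b` in the tree `T` rooted at `ρ`. -/
def IsChild {ι : Type*} (T : SimpleGraph ι) (ρ b i : ι) : Prop :=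
  T.Adj b i ∧ InSubtree T ρ b i

/-- The down-closure of the node `i`: the union of all bags in the subtree rooted
at `i`. -/
def DownClosure {V ι : Type*} (T : SimpleGraph ι) (ρ : ι) (bag : ι → Set V)
    (i : ι) : Set V :=
  ⋃ j ∈ {j | InSubtree T ρ i j}, bag j

/-! If `x` lies below the child `i` and `y` below the child `j`, the tree paths from `b` to `x`
and to `y` begin with the distinct edges `bi` and `bj`. By uniqueness of paths in a tree they
meet only at `b`, so together they form a path from `x` to `y` through `b`, and the path
condition of the decomposition at `b` gives the claim. -/

namespace SimpleGraph

variable {V : Type*} {G : SimpleGraph V}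

theorem Walk.IsPath.append_of_support_inter {u v w : V} {p : G.Walk u v} {q : G.Walk v w}
    (hp : p.IsPath) (hq : q.IsPath) (hpq : ∀ z ∈ p.support, z ∈ q.support → z = v) :
    (p.append q).IsPath := by
  have hq' : (v :: q.support.tail).Nodup := q.cons_tail_support ▸ hq.support_nodup
  rw [Walk.isPath_def, Walk.support_append, List.nodup_append]
  refine ⟨hp.support_nodup, (List.nodup_cons.mp hq').2, ?_⟩
  rintro z hzp _ hzq rfl
  have hzv := hpq z hzp (List.mem_of_mem_tail hzq)
  exact (List.nodup_cons.mp hq').1 (hzv ▸ hzq)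

theorem IsAcyclic.isPath_reverse_append {u v w : V} (hG : G.IsAcyclic) {p : G.Walk u v}
    {q : G.Walk u w} (hp : p.IsPath) (hq : q.IsPath) (hsnd : p.snd ≠ q.snd) :
    (p.reverse.append q).IsPath := by
  classical
  refine hp.reverse.append_of_support_inter hq fun z hzp hzq => ?_
  rw [Walk.support_reverse, List.mem_reverse] at hzp
  by_contra hzu
  -- the initial segments of `p` and `q` up to `z` are paths `u → z`, hence equal
  have htake := (hG.subsingleton_path u z).elim ⟨_, hp.takeUntil hzp⟩ ⟨_, hq.takeUntil hzq⟩
  apply hsnd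
  rw [← Walk.snd_takeUntil hzu p hzp, ← Walk.snd_takeUntil hzu q hzq]
  exact congrArg (fun r : G.Path u z => r.1.snd) htake

end SimpleGraph

namespace IsChild

open SimpleGraph

variable {V : Type*} {G : SimpleGraph V} {ρ b i x : V}

theorem notMem_support (hi : IsChild G ρ b i) {q : G.Walk ρ b} (hq : q.IsPath) :
    i ∉ q.support := by
  classical
  exact fun hiq => Walk.endpoint_notMem_support_takeUntil hq hiq hi.1.ne
    (hi.2 _ (hq.takeUntil hiq))

theorem mem_support_of_inSubtree (hG : G.Connected) (hi : IsChild G ρ b i)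
    (hx : InSubtree G ρ i x) (p : G.Walk b x) : i ∈ p.support := by
  classical
  obtain ⟨q, hq⟩ := hG.preconnected.exists_isPath ρ b
  have hiqp := (q.append p).support_bypass_subset_support (hx _ (q.append p).bypass_isPath)
  rw [Walk.mem_support_append_iff] at hiqp
  exact hiqp.resolve_left (hi.notMem_support hq)

theorem snd_eq_of_inSubtree (hG : G.IsTree) (hi : IsChild G ρ b i) (hx : InSubtree G ρ i x)
    {p : G.Walk b x} (hp : p.IsPath) : p.snd = i :=
  (hG.isAcyclic.eq_snd_of_adj_start hp hi.1 (hi.mem_support_of_inSubtree hG.connected hx p)).symm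

theorem exists_isPath_mem_support {j y : V} (hG : G.IsTree) (hi : IsChild G ρ b i)
    (hj : IsChild G ρ b j) (hij : i ≠ j) (hx : InSubtree G ρ i x) (hy : InSubtree G ρ j y) :
    ∃ w : G.Walk x y, w.IsPath ∧ b ∈ w.support := by
  obtain ⟨p, hp⟩ := hG.connected.preconnected.exists_isPath b x
  obtain ⟨q, hq⟩ := hG.connected.preconnected.exists_isPath b y
  refine ⟨p.reverse.append q, hG.isAcyclic.isPath_reverse_append hp hq ?_, ?_⟩
  · rwa [hi.snd_eq_of_inSubtree hG hx hp, hj.snd_eq_of_inSubtree hG hy hq]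
  · exact Walk.support_subset_support_append_right _ _ q.start_mem_support

end IsChild

theorem dtd_children_reach_inter_general {V ι : Type*}
    (r : V → V → Prop) (T : SimpleGraph ι) (bag : ι → Set V) (h : IsDTD r T bag)
    (ρ b i j : ι) (hi : IsChild T ρ b i) (hj : IsChild T ρ b j) (hij : i ≠ j) :
    Reach r (DownClosure T ρ bag i) ∩ Reach r (DownClosure T ρ bag j)
      ⊆ Reach r (bag b) := by
  rintro v ⟨⟨u, hu, huv⟩, ⟨u', hu', hu'v⟩⟩
  simp only [DownClosure, Set.mem_iUnion] at hu hu'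
  obtain ⟨x, hx, hux⟩ := hu
  obtain ⟨y, hy, hu'y⟩ := hu'
  obtain ⟨w, hw, hbw⟩ := hi.exists_isPath_mem_support h.isTree hj hij hx hy
  exact h.path_prop b x y w hw hbw ⟨⟨u, hux, huv⟩, ⟨u', hu'y, hu'v⟩⟩

/-- In a dag tree decomposition of `r` rooted at `ρ`, if `i` and `j` are distinct
children of a node `b`, then the vertex sets reachable from their down-closures
intersect only inside the set reachable from the bag of `b`. -/
theorem dtd_children_reach_inter {V ι : Type*} [Fintype V] [Fintype ι]
    (r : V → V → Prop) (hr : DigraphAcyclic r)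
    (T : SimpleGraph ι) (bag : ι → Set V) (h : IsDTD r T bag)
    (ρ b i j : ι) (hi : IsChild T ρ b i) (hj : IsChild T ρ b j) (hij : i ≠ j) :
    Reach r (DownClosure T ρ bag i) ∩ Reach r (DownClosure T ρ bag j)
      ⊆ Reach r (bag b) :=
  dtd_children_reach_inter_general r T bag h ρ b i j hi hj hij
end

section
/- For any dag P with source set S and any subset B ⊆ S, the number of homomorphisms from P(B) to an n-vertex dag G of maximum out-degree d is at most d^(k-|B|) · n^(|B|), where k is the number of vertices of P(B). -/
theorem emb_aux {W : Type*} {d : ℕ} (s : W → W → Prop)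
    (e : ∀ w : W, {x // s w x} ↪ Fin d) {w1 w2 a b : W}
    (hw : w1 = w2) (ha : s w1 a) (hb : s w2 b)
    (h : e w1 ⟨a, ha⟩ = e w2 ⟨b, hb⟩) : a = b := by
  subst hw
  exact congrArg Subtype.val ((e w1).injective h)

/-- For a dag `r` on a finite vertex set, a set `B` of sources, and an `n`-vertex
dag `s` of maximum out-degree at most `d`, the number of homomorphisms from the
subgraph `P(B)` of `r` induced by the vertices reachable from `B` to `s` is at most
`d ^ (k - |B|) * n ^ |B|`, where `k` is the number of vertices of `P(B)`. -/
theorem hom_count_le {V W : Type*} [Fintype V] [Fintype W]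
    (r : V → V → Prop) (hr : DigraphAcyclic r)
    (s : W → W → Prop) (hs : DigraphAcyclic s)
    (B : Set V) (hB : B ⊆ {v | IsSource r v}) (d : ℕ)
    (hd : ∀ w : W, {x | s w x}.ncard ≤ d) :
    {φ : ↥(Reach r B) → W | ∀ u v : ↥(Reach r B), r u.1 v.1 → s (φ u) (φ v)}.ncard
      ≤ d ^ ((Reach r B).ncard - B.ncard) * (Fintype.card W) ^ B.ncard := by
  classical
  set R := Reach r B with hRdef
  have hBR : B ⊆ R := fun b hb => ⟨b, hb, Relation.ReflTransGen.refl⟩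
  set S := {φ : ↥R → W | ∀ u v : ↥R, r u.1 v.1 → s (φ u) (φ v)} with hSdef
  have hpred : ∀ v, v ∈ R → v ∉ B → ∃ u, u ∈ R ∧ r u v := by
    rintro v ⟨b, hb, hbv⟩ hvB
    rcases hbv.cases_tail with h | ⟨u, hbu, huv⟩
    · exact absurd (h ▸ hb) hvB
    · exact ⟨u, ⟨b, hb, hbu⟩, huv⟩
  choose pred hpR hpr using hpred
  have e : ∀ w : W, {x // s w x} ↪ Fin d := by
    intro w
    have h1 : Nat.card {x // s w x} ≤ d :=
      (Nat.card_coe_set_eq {x | s w x}).trans_le (hd w)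
    exact (Finite.equivFin _).toEmbedding.trans (Fin.castLEEmb h1)
  haveI : IsTrans V (Relation.TransGen r) := ⟨fun _ _ _ => Relation.TransGen.trans⟩
  haveI : IsIrrefl V (Relation.TransGen r) := ⟨hr⟩
  have hwf : WellFounded (Relation.TransGen r) :=
    Finite.wellFounded_of_trans_of_irrefl _
  let g : ↥S → (↥B → W) × (↥(R \ B) → Fin d) := fun φ =>
    (fun b => φ.1 ⟨b.1, hBR b.2⟩,
     fun v => e (φ.1 ⟨pred v.1 v.2.1 v.2.2, hpR _ _ _⟩)
       ⟨φ.1 ⟨v.1, v.2.1⟩, φ.2 _ _ (hpr v.1 v.2.1 v.2.2)⟩)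
  have hg : Function.Injective g := by
    intro φ ψ hfeq
    have h1 : ∀ b : ↥B, φ.1 ⟨b.1, hBR b.2⟩ = ψ.1 ⟨b.1, hBR b.2⟩ :=
      fun b => congrFun (congrArg Prod.fst hfeq) b
    have h2 := congrFun (congrArg Prod.snd hfeq)
    have key : ∀ v : V, ∀ hv : v ∈ R, φ.1 ⟨v, hv⟩ = ψ.1 ⟨v, hv⟩ := by
      intro v
      induction v using hwf.induction with
      | _ v ih =>
        intro hv
        by_cases hvB : v ∈ B
        · exact h1 ⟨v, hvB⟩
        · have hp := ih (pred v hv hvB)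
            (Relation.TransGen.single (hpr v hv hvB)) (hpR v hv hvB)
          have h2v := h2 ⟨v, hv, hvB⟩
          simp only [g] at h2v
          exact emb_aux s e hp _ _ h2v
    exact Subtype.ext (funext fun v => key v.1 v.2)
  have hle : Nat.card ↥S ≤ Nat.card ((↥B → W) × (↥(R \ B) → Fin d)) :=
    Nat.card_le_card_of_injective g hg
  have hS : S.ncard = Nat.card ↥S := (Nat.card_coe_set_eq S).symm
  have hRB : (R \ B).ncard = R.ncard - B.ncard := Set.ncard_diff hBR B.toFinite
  calc S.ncard = Nat.card ↥S := hS
    _ ≤ Nat.card ((↥B → W) × (↥(R \ B) → Fin d)) := hle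
    _ = (Fintype.card W) ^ B.ncard * d ^ (R.ncard - B.ncard) := by
        rw [Nat.card_prod, Nat.card_fun, Nat.card_fun, Nat.card_eq_fintype_card (α := W),
          Nat.card_eq_fintype_card (α := Fin d), Fintype.card_fin,
          Nat.card_coe_set_eq, Nat.card_coe_set_eq, hRB]
    _ = d ^ (R.ncard - B.ncard) * (Fintype.card W) ^ B.ncard := mul_comm _ _
end
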